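/- arXiv:1709.03834 — 3 statements merged into one kernel-verified Lean document; each statement's English description precedes it below -/
import Mathlib

section
/- Let Δ be a simplicial complex with a torsion-free surjective finite abelian group structure 𝒢 (i.e., |𝒢(∅)| = 1). Then the independence poset Ind(E, Δ, 𝒢) is a simplicial poset with unique minimal element (∅, 0): every interval from the minimal element to any element (S, g) is isomorphic to the Boolean algebra of subsets of S. -/
open Finset

/-- An assignment of finite abelian groups to the finite subsets of `E`. -/
structure GAssign (E : Type*) [DecidableEq E] where
  G : Finset E → Type
  grp : ∀ S, AddCommGroup (G S)
  fin : ∀ S, Fintype (G S)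

instance {E : Type*} [DecidableEq E] (A : GAssign E) (S : Finset E) :
    AddCommGroup (A.G S) := A.grp S

instance {E : Type*} [DecidableEq E] (A : GAssign E) (S : Finset E) :
    Fintype (A.G S) := A.fin S

/-- A surjective finite abelian group structure on the simplicial complex `Δ`:
finite abelian groups attached to faces, with surjective structure maps along covers
satisfying the commuting-squares condition. -/
structure SFAGS {E : Type*} [DecidableEq E] (Δ : Finset (Finset E)) extends GAssign E where
  π : ∀ (S : Finset E) (a : E), a ∉ S → (toGAssign.G (insert a S) →+ toGAssign.G S)
  surj : ∀ (S : Finset E) (a : E) (ha : a ∉ S), insert a S ∈ Δ →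
    Function.Surjective (π S a ha)
  comm : ∀ (S : Finset E) (a b : E) (ha : a ∉ S) (hb : b ∉ S)
    (hab : a ∉ insert b S) (hba : b ∉ insert a S),
    insert a (insert b S) ∈ Δ →
    ∀ g : toGAssign.G (insert a (insert b S)),
      π S b hb (π (insert b S) a hab g) =
      π S a ha (π (insert a S) b hba
        (cast (congrArg toGAssign.G (Finset.insert_comm a b S)) g))

namespace SFAGS

variable {E : Type*} [DecidableEq E] {Δ : Finset (Finset E)}

/-- Transport along an equality of finsets, as a group homomorphism. -/
def castHom (𝒢 : SFAGS Δ) {S T : Finset E} (h : S = T) : 𝒢.G S →+ 𝒢.G T := by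
  subst h; exact AddMonoidHom.id _

/-- The composite of the structure maps along a list enumerating a face. -/
def chainMap (𝒢 : SFAGS Δ) : (L : List E) → L.Nodup → (𝒢.G L.toFinset →+ 𝒢.G ∅)
  | [], _ => 𝒢.castHom (by simp)
  | a :: L, h =>
      ((𝒢.chainMap L (List.nodup_cons.mp h).2).comp
        (𝒢.π L.toFinset a (by simpa using (List.nodup_cons.mp h).1))).comp
        (𝒢.castHom (by simp))

/-- The composite map `π_S : 𝒢(S) → 𝒢(∅)`. -/
noncomputable def piS (𝒢 : SFAGS Δ) (S : Finset E) : 𝒢.G S →+ 𝒢.G ∅ :=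
  (𝒢.chainMap S.toList S.nodup_toList).comp (𝒢.castHom S.toList_toFinset.symm)

/-- The elements of the independence poset `Ind(E, Δ, 𝒢)`: pairs `(S, g)` with
`S ∈ Δ` and `g ∈ 𝒢(S)`. -/
def Elem (𝒢 : SFAGS Δ) := {p : Σ S : Finset E, 𝒢.G S // p.1 ∈ Δ}

/-- The cover relation of the independence poset: `(insert a S, g)` covers `(S, h)`
iff `π_{S,a}(g) = h`. -/
def CovBy (𝒢 : SFAGS Δ) (p q : 𝒢.Elem) : Prop :=
  ∃ (a : E) (ha : a ∉ p.1.1) (h : q.1.1 = insert a p.1.1),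
    𝒢.π p.1.1 a ha (𝒢.castHom h q.1.2) = p.1.2

/-- The order of the independence poset: reflexive-transitive closure of the covers. -/
def le (𝒢 : SFAGS Δ) : 𝒢.Elem → 𝒢.Elem → Prop := Relation.ReflTransGen 𝒢.CovBy

end SFAGS

/-!
Every element below `(S, g)` is reached from it by deleting the points of `S` one at a time,
and deleting down to a prescribed face `T ⊆ S` is always possible. The commuting squares say
that deleting `a` and then `b` gives the same element as deleting `b` and then `a`; by
induction on `|S|` this diamond property makes the element of face `T` below `(S, g)` unique.
So the interval below `(S, g)` is in bijection with the subsets of `S`, and the order on it is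
inclusion. Torsion-freeness makes `(∅, 0)` the only element over the empty face, hence the
bottom of the poset.
-/

namespace SFAGS

variable {E : Type*} [DecidableEq E] {Δ : Finset (Finset E)} {𝒢 : SFAGS Δ}

lemma castHom_apply {S T : Finset E} (h : S = T) (g : 𝒢.G S) :
    𝒢.castHom h g = cast (congrArg 𝒢.G h) g := by
  subst h; rfl

lemma Elem.ext {p q : 𝒢.Elem} (hS : p.1.1 = q.1.1) (hg : 𝒢.castHom hS p.1.2 = q.1.2) :
    p = q := by
  obtain ⟨⟨S, g⟩, hp⟩ := p
  obtain ⟨⟨T, h⟩, hq⟩ := q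
  dsimp only at hS hg
  subst hS
  change g = h at hg
  subst hg
  rfl

/-- `π_{S,a}` on a face `W` only propositionally equal to `insert a S`, so that faces can be
substituted away when proving the diamond. -/
def proj (𝒢 : SFAGS Δ) {W S : Finset E} {a : E} (ha : a ∉ S) (hW : W = insert a S) :
    𝒢.G W →+ 𝒢.G S :=
  (𝒢.π S a ha).comp (𝒢.castHom hW)

lemma castHom_proj {W S S' : Finset E} (hS : S = S') {a : E} (ha : a ∉ S) (ha' : a ∉ S')
    (hW : W = insert a S) (hW' : W = insert a S') (g : 𝒢.G W) :
    𝒢.castHom hS (𝒢.proj ha hW g) = 𝒢.proj ha' hW' g := by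
  subst hS; rfl

lemma proj_proj_comm {W X Y S : Finset E} {a b : E}
    (haX : a ∉ X) (hWX : W = insert a X) (hbS : b ∉ S) (hXS : X = insert b S)
    (hbY : b ∉ Y) (hWY : W = insert b Y) (haS : a ∉ S) (hYS : Y = insert a S)
    (hW : W ∈ Δ) (g : 𝒢.G W) :
    𝒢.proj hbS hXS (𝒢.proj haX hWX g) = 𝒢.proj haS hYS (𝒢.proj hbY hWY g) := by
  subst hXS hYS hWX
  simpa [proj, castHom_apply] using 𝒢.comm S a b haS hbS haX hbY hW g

lemma fst_subset_of_le {p q : 𝒢.Elem} (h : 𝒢.le q p) : q.1.1 ⊆ p.1.1 := by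
  induction h with
  | refl => exact subset_rfl
  | tail _ hcov ih =>
    obtain ⟨a, -, hins, -⟩ := hcov
    exact ih.trans (hins ▸ subset_insert a _)

lemma eq_of_le_of_fst_eq {p q : 𝒢.Elem} (h : 𝒢.le q p) (hS : q.1.1 = p.1.1) : q = p := by
  rcases Relation.ReflTransGen.cases_tail h with rfl | ⟨c, hqc, a, hac, hins, -⟩
  · rfl
  · refine absurd (fst_subset_of_le hqc ?_) hac
    rw [hS, hins]
    exact mem_insert_self a _

variable (hdc : ∀ ⦃S T : Finset E⦄, S ⊆ T → T ∈ Δ → S ∈ Δ)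
include hdc

def Elem.erase (p : 𝒢.Elem) (a : E) (ha : a ∈ p.1.1) : 𝒢.Elem :=
  ⟨⟨p.1.1.erase a, 𝒢.proj (notMem_erase a _) (insert_erase ha).symm p.1.2⟩,
    hdc (erase_subset _ _) p.2⟩

lemma covBy_erase (p : 𝒢.Elem) (a : E) (ha : a ∈ p.1.1) : 𝒢.CovBy (p.erase hdc a ha) p :=
  ⟨a, notMem_erase a _, (insert_erase ha).symm, rfl⟩

lemma le_erase (p : 𝒢.Elem) (a : E) (ha : a ∈ p.1.1) : 𝒢.le (p.erase hdc a ha) p :=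
  .single (covBy_erase hdc p a ha)

lemma covBy_iff_eq_erase {p q : 𝒢.Elem} :
    𝒢.CovBy q p ↔ ∃ (a : E) (ha : a ∈ p.1.1), q = p.erase hdc a ha := by
  refine ⟨?_, ?_⟩
  · rintro ⟨a, ha, hins, hg⟩
    have haP : a ∈ p.1.1 := hins ▸ mem_insert_self a _
    have hS : q.1.1 = p.1.1.erase a := by rw [hins, erase_insert ha]
    refine ⟨a, haP, Elem.ext hS ?_⟩
    rw [← hg]
    exact castHom_proj hS ha (notMem_erase a _) hins (insert_erase haP).symm p.1.2
  · rintro ⟨a, ha, rfl⟩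
    exact covBy_erase hdc p a ha

lemma Elem.erase_erase_comm (p : 𝒢.Elem) {a b : E} (ha : a ∈ p.1.1) (hb : b ∈ p.1.1)
    (hb' : b ∈ (p.erase hdc a ha).1.1) (ha' : a ∈ (p.erase hdc b hb).1.1) :
    (p.erase hdc a ha).erase hdc b hb' = (p.erase hdc b hb).erase hdc a ha' := by
  have hS : (p.1.1.erase a).erase b = (p.1.1.erase b).erase a := erase_right_comm
  refine Elem.ext hS ?_
  have hbS : b ∉ (p.1.1.erase b).erase a := fun h => notMem_erase b _ (mem_of_mem_erase h)
  have hXS : p.1.1.erase a = insert b ((p.1.1.erase b).erase a) :=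
    hS ▸ (insert_erase hb').symm
  exact (castHom_proj hS (notMem_erase b _) hbS (insert_erase hb').symm hXS _).trans <|
    proj_proj_comm (notMem_erase a _) (insert_erase ha).symm hbS hXS (notMem_erase b _)
      (insert_erase hb).symm (notMem_erase a _) (insert_erase ha').symm p.2 p.1.2

lemma exists_le_fst_eq (p : 𝒢.Elem) {T : Finset E} (hT : T ⊆ p.1.1) :
    ∃ q : 𝒢.Elem, 𝒢.le q p ∧ q.1.1 = T := by
  induction hn : (p.1.1 \ T).card generalizing p with
  | zero =>
    exact ⟨p, .refl, (hT.antisymm (sdiff_eq_empty_iff_subset.mp (card_eq_zero.mp hn))).symm⟩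
  | succ n ih =>
    obtain ⟨a, haS⟩ : (p.1.1 \ T).Nonempty := card_pos.mp (by omega)
    obtain ⟨ha, haT⟩ := mem_sdiff.mp haS
    have hcard : ((p.erase hdc a ha).1.1 \ T).card = n := by
      change (p.1.1.erase a \ T).card = n
      rw [erase_sdiff_comm, card_erase_of_mem haS, hn, Nat.add_sub_cancel]
    obtain ⟨q, hqp, hq⟩ := ih (p.erase hdc a ha) (subset_erase.mpr ⟨hT, haT⟩) hcard
    exact ⟨q, hqp.trans (le_erase hdc p a ha), hq⟩

lemma eq_of_le_of_le_of_fst_eq (p : 𝒢.Elem) {q r : 𝒢.Elem} (hq : 𝒢.le q p) (hr : 𝒢.le r p)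
    (hqr : q.1.1 = r.1.1) : q = r := by
  rcases Relation.ReflTransGen.cases_tail hq with rfl | ⟨c, hqc, hcp⟩
  · exact (eq_of_le_of_fst_eq hr hqr.symm).symm
  rcases Relation.ReflTransGen.cases_tail hr with rfl | ⟨d, hrd, hdp⟩
  · exact eq_of_le_of_fst_eq hq hqr
  obtain ⟨a, ha, rfl⟩ := (covBy_iff_eq_erase hdc).mp hcp
  obtain ⟨b, hb, rfl⟩ := (covBy_iff_eq_erase hdc).mp hdp
  have := card_erase_lt_of_mem ha
  have := card_erase_lt_of_mem hb
  by_cases hab : a = b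
  · subst hab
    exact eq_of_le_of_le_of_fst_eq (p.erase hdc a ha) hqc hrd hqr
  -- Both `q` and `r` lie below the common lower corner of the diamond on `a` and `b`.
  have hb' : b ∈ (p.erase hdc a ha).1.1 := mem_erase.mpr ⟨Ne.symm hab, hb⟩
  have ha' : a ∈ (p.erase hdc b hb).1.1 := mem_erase.mpr ⟨hab, ha⟩
  have hqs : q.1.1 ⊆ ((p.erase hdc a ha).erase hdc b hb').1.1 :=
    subset_erase.mpr ⟨fst_subset_of_le hqc,
      fun hbq => notMem_erase b _ (fst_subset_of_le hrd (hqr ▸ hbq))⟩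
  obtain ⟨s, hs, hsq⟩ := exists_le_fst_eq hdc _ hqs
  have hsa : 𝒢.le s (p.erase hdc a ha) := hs.trans (le_erase hdc _ b hb')
  have hsb : 𝒢.le s (p.erase hdc b hb) :=
    (Elem.erase_erase_comm hdc p ha hb hb' ha' ▸ hs).trans (le_erase hdc _ a ha')
  rw [eq_of_le_of_le_of_fst_eq _ hqc hsa hsq.symm,
    eq_of_le_of_le_of_fst_eq _ hrd hsb (hsq.trans hqr).symm]
termination_by p.1.1.card

lemma le_iff_subset_of_le {p q₁ q₂ : 𝒢.Elem} (h₁ : 𝒢.le q₁ p) (h₂ : 𝒢.le q₂ p) :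
    𝒢.le q₁ q₂ ↔ q₁.1.1 ⊆ q₂.1.1 := by
  refine ⟨fst_subset_of_le, fun hS => ?_⟩
  obtain ⟨r, hr, hrS⟩ := exists_le_fst_eq hdc q₂ hS
  exact eq_of_le_of_le_of_fst_eq hdc p (hr.trans h₂) h₁ hrS ▸ hr

lemma bijective_fst_of_le (p : 𝒢.Elem) :
    Function.Bijective (fun q : {q : 𝒢.Elem // 𝒢.le q p} =>
      (⟨q.1.1.1, fst_subset_of_le q.2⟩ : {T : Finset E // T ⊆ p.1.1})) := by
  refine ⟨fun q₁ q₂ h => Subtype.ext ?_, fun ⟨T, hT⟩ => ?_⟩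
  · exact eq_of_le_of_le_of_fst_eq hdc p q₁.2 q₂.2 (congrArg Subtype.val h)
  · obtain ⟨q, hqp, hq⟩ := exists_le_fst_eq hdc p hT
    exact ⟨⟨q, hqp⟩, Subtype.ext hq⟩

end SFAGS

/-- If `𝒢` is torsion-free (`|𝒢(∅)| = 1`), then the independence poset
`Ind(E, Δ, 𝒢)` is a simplicial poset with unique minimal element `(∅, 0)`: every element
lies above `(∅, 0)`, and the interval from `(∅, 0)` to any element `(S, g)` is isomorphic
to the Boolean algebra of subsets of `S`. -/
theorem ind_poset_simplicial {E : Type*} [DecidableEq E] {Δ : Finset (Finset E)}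
    (𝒢 : SFAGS Δ) (hdc : ∀ ⦃S T : Finset E⦄, S ⊆ T → T ∈ Δ → S ∈ Δ)
    (hempty : ∅ ∈ Δ) (htf : Nat.card (𝒢.G ∅) = 1) :
    (∀ p : 𝒢.Elem, 𝒢.le ⟨⟨∅, 0⟩, hempty⟩ p) ∧
    (∀ p : 𝒢.Elem, ∃ e : {q : 𝒢.Elem // 𝒢.le q p} ≃ {T : Finset E // T ⊆ p.1.1},
      ∀ q₁ q₂ : {q : 𝒢.Elem // 𝒢.le q p}, 𝒢.le q₁.1 q₂.1 ↔ (e q₁).1 ⊆ (e q₂).1) := by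
  have : Subsingleton (𝒢.G ∅) := (Nat.card_eq_one_iff_unique.mp htf).1
  refine ⟨fun p => ?_, fun p => ⟨.ofBijective _ (SFAGS.bijective_fst_of_le hdc p),
    fun q₁ q₂ => SFAGS.le_iff_subset_of_le hdc q₁.2 q₂.2⟩⟩
  obtain ⟨q, hqp, hq⟩ := SFAGS.exists_le_fst_eq hdc p (empty_subset _)
  have hbot : q = ⟨⟨∅, 0⟩, hempty⟩ := SFAGS.Elem.ext hq (Subsingleton.elim _ _)
  exact hbot ▸ hqp
end

section
/- Let Δ be a simplicial complex with a surjective finite abelian group structure 𝒢, and fix a face S ∈ Δ. For any two elements g_1, g_2 ∈ 𝒢(∅), the number of elements h ∈ 𝒢(S) with π_S(h) = g_1 equals the number with π_S(h) = g_2 (namely both equal |𝒢(S)|/|𝒢(∅)|). Consequently, the f-vectors of the connected components of Ind(E, Δ, 𝒢) are pairwise equal. -/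
open Finset

/-
Every structure map `π_{T,a}` out of a face is surjective, and faces are closed under taking
subsets, so the composite `π_S` is a surjective homomorphism for every face `S`. The fibers of a
surjective homomorphism of finite groups are cosets of its kernel, hence all have `|𝒢(S)|/|𝒢(∅)|`
elements. Grading the elements of `Ind(E, Δ, 𝒢)` lying over `g ∈ 𝒢(∅)` by their face, each
rank-`i` piece is a disjoint union of such fibers over the faces of size `i`, one per face,
independently of `g`.
-/

theorem AddMonoidHom.card_fiber_of_surjective {A B : Type*} [AddGroup A] [AddGroup B]
    [Finite A] {f : A →+ B} (hf : Function.Surjective f) (b : B) :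
    Nat.card (f ⁻¹' {b}) = Nat.card A / Nat.card B := by
  have hindex : f.ker.index = Nat.card B := by
    rw [AddSubgroup.index_ker, AddMonoidHom.range_eq_top.mpr hf, AddSubgroup.card_top]
  have hB : 0 < Nat.card B := Nat.card_pos_iff.mpr ⟨⟨0⟩, Finite.of_surjective f hf⟩
  rw [Nat.card_congr (AddMonoidHom.fiberEquivKerOfSurjective hf b), ← f.ker.card_mul_index,
    hindex, Nat.mul_div_cancel _ hB]

namespace SFAGS

variable {E : Type*} [DecidableEq E] {Δ : Finset (Finset E)} (𝒢 : SFAGS Δ)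

theorem castHom_surjective {S T : Finset E} (h : S = T) :
    Function.Surjective (𝒢.castHom h) := by
  subst h
  exact Function.surjective_id

theorem chainMap_surjective (hΔ : ∀ ⦃S T : Finset E⦄, S ⊆ T → T ∈ Δ → S ∈ Δ) :
    ∀ (L : List E) (hL : L.Nodup), L.toFinset ∈ Δ → Function.Surjective (𝒢.chainMap L hL)
  | [], _, _ => 𝒢.castHom_surjective _
  | a :: L, hL, hmem => by
    have hface : insert a L.toFinset ∈ Δ := by simpa using hmem
    have ha : a ∉ L.toFinset := by simpa using (List.nodup_cons.mp hL).1
    exact ((chainMap_surjective hΔ L _ (hΔ (subset_insert _ _) hface)).comp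
      (𝒢.surj _ a ha hface)).comp (𝒢.castHom_surjective _)

theorem piS_surjective (hΔ : ∀ ⦃S T : Finset E⦄, S ⊆ T → T ∈ Δ → S ∈ Δ) {S : Finset E}
    (hS : S ∈ Δ) : Function.Surjective (𝒢.piS S) :=
  (𝒢.chainMap_surjective hΔ _ _ (by rwa [toList_toFinset])).comp (𝒢.castHom_surjective _)

def rankFiberEquivSigma (i : ℕ) (g : 𝒢.G ∅) :
    {p : 𝒢.Elem // p.1.1.card = i ∧ 𝒢.piS p.1.1 p.1.2 = g} ≃
      Σ T : {T : Finset E // T ∈ Δ ∧ T.card = i}, 𝒢.piS T.1 ⁻¹' {g} where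
  toFun p := ⟨⟨p.1.1.1, p.1.2, p.2.1⟩, ⟨p.1.1.2, p.2.2⟩⟩
  invFun q := ⟨⟨⟨q.1.1, q.2.1⟩, q.1.2.1⟩, q.1.2.2, q.2.2⟩
  left_inv _ := rfl
  right_inv _ := rfl

end SFAGS

theorem ind_poset_fibers_equal_general {E : Type*} [DecidableEq E]
    {Δ : Finset (Finset E)} (𝒢 : SFAGS Δ)
    (hdc : ∀ ⦃S T : Finset E⦄, S ⊆ T → T ∈ Δ → S ∈ Δ)
    (S : Finset E) (hS : S ∈ Δ) (g₁ g₂ : 𝒢.G ∅) :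
    (Nat.card {h : 𝒢.G S // 𝒢.piS S h = g₁} =
        Nat.card {h : 𝒢.G S // 𝒢.piS S h = g₂} ∧
      Nat.card {h : 𝒢.G S // 𝒢.piS S h = g₁} =
        Fintype.card (𝒢.G S) / Fintype.card (𝒢.G ∅)) ∧
    ∀ i : ℕ,
      Nat.card {p : 𝒢.Elem // p.1.1.card = i ∧ 𝒢.piS p.1.1 p.1.2 = g₁} =
      Nat.card {p : 𝒢.Elem // p.1.1.card = i ∧ 𝒢.piS p.1.1 p.1.2 = g₂} := by
  have hsurj := 𝒢.piS_surjective hdc hS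
  refine ⟨⟨Nat.card_congr (AddMonoidHom.fiberEquivOfSurjective hsurj g₁ g₂), ?_⟩, fun i => ?_⟩
  · rw [← Nat.card_eq_fintype_card, ← Nat.card_eq_fintype_card]
    exact AddMonoidHom.card_fiber_of_surjective hsurj g₁
  · exact Nat.card_congr <| (𝒢.rankFiberEquivSigma i g₁).trans <|
      (Equiv.sigmaCongrRight fun T => AddMonoidHom.fiberEquivOfSurjective
        (𝒢.piS_surjective hdc T.2.1) g₁ g₂).trans (𝒢.rankFiberEquivSigma i g₂).symm

/-- For a face `S ∈ Δ`, the fibers of `π_S : 𝒢(S) → 𝒢(∅)` all have the same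
cardinality, namely `|𝒢(S)|/|𝒢(∅)|`; consequently the f-vectors of the connected
components of `Ind(E, Δ, 𝒢)` (elements of rank `i` above the minimal element `(∅, g)`)
are pairwise equal. -/
theorem ind_poset_fibers_equal {E : Type*} [DecidableEq E] [Fintype E]
    {Δ : Finset (Finset E)} (𝒢 : SFAGS Δ)
    (hdc : ∀ ⦃S T : Finset E⦄, S ⊆ T → T ∈ Δ → S ∈ Δ)
    (S : Finset E) (hS : S ∈ Δ) (g₁ g₂ : 𝒢.G ∅) :
    (Nat.card {h : 𝒢.G S // 𝒢.piS S h = g₁} =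
        Nat.card {h : 𝒢.G S // 𝒢.piS S h = g₂} ∧
      Nat.card {h : 𝒢.G S // 𝒢.piS S h = g₁} =
        Fintype.card (𝒢.G S) / Fintype.card (𝒢.G ∅)) ∧
    ∀ i : ℕ,
      Nat.card {p : 𝒢.Elem // p.1.1.card = i ∧ 𝒢.piS p.1.1 p.1.2 = g₁} =
      Nat.card {p : 𝒢.Elem // p.1.1.card = i ∧ 𝒢.piS p.1.1 p.1.2 = g₂} :=
  ind_poset_fibers_equal_general 𝒢 hdc S hS g₁ g₂
end

section
/- Consider the arithmetic matroid on ground set {1,2} with Δ = 2^{{1,2}} (the uniform matroid U_{2,2}) and multiplicity m(∅)=1, m({1})=m({2})=m({1,2})=2. Its arithmetic Tutte polynomial is 𝔐(x,y) = x² + 2x − 1, and hence its h-vector (1, 2, −1) has a negative entry. -/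
open Finset Polynomial

theorem Finset.sum_powerset_univ_fin_two {M : Type*} [AddCommMonoid M]
    (f : Finset (Fin 2) → M) :
    ∑ A ∈ (univ : Finset (Fin 2)).powerset, f A = f ∅ + f {0} + f {1} + f {0, 1} := by
  have h : (univ : Finset (Fin 2)).powerset = {∅, {0}, {1}, {0, 1}} := by decide
  rw [h, sum_insert (by decide), sum_insert (by decide), sum_insert (by decide),
    sum_singleton, ← add_assoc, ← add_assoc]

theorem arithmeticTutte_u22 {R : Type*} [CommRing R] (x y : R) :
    ∑ A ∈ (univ : Finset (Fin 2)).powerset,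
        (if A = ∅ then 1 else 2 : R) * (x - 1) ^ (2 - A.card) * (y - 1) ^ (A.card - A.card) =
      x ^ 2 + 2 * x - 1 := by
  rw [sum_powerset_univ_fin_two]
  simp only [Nat.sub_self, pow_zero, mul_one, card_empty, card_singleton, if_true,
    singleton_ne_empty, insert_ne_empty, if_false, Nat.sub_zero,
    show ({0, 1} : Finset (Fin 2)).card = 2 from rfl]
  ring

/-- For the arithmetic matroid on `{1,2}` with `Δ = 2^{{1,2}}` (the uniform
matroid `U_{2,2}`, whose rank function is the cardinality) and multiplicities `m(∅) = 1`,
`m({1}) = m({2}) = m({1,2}) = 2`, the arithmetic Tutte polynomial is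
`𝔐(x,y) = x² + 2x - 1`; hence the h-vector `(1, 2, -1)` (the coefficient sequence of
`𝔐(t,1)`) has a negative entry: the coefficient of `t⁰` is negative. -/
theorem u22_aritutte_negative_h :
    (∀ (R : Type) (_ : CommRing R) (x y : R),
      (∑ A ∈ (Finset.univ : Finset (Fin 2)).powerset,
          (if A = ∅ then 1 else 2 : R) * (x - 1) ^ (2 - A.card) *
            (y - 1) ^ (A.card - A.card)) = x ^ 2 + 2 * x - 1) ∧
    (∑ A ∈ (Finset.univ : Finset (Fin 2)).powerset,
        (if A = ∅ then 1 else 2 : Polynomial ℤ) * (Polynomial.X - 1) ^ (2 - A.card) *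
          ((1 : Polynomial ℤ) - 1) ^ (A.card - A.card)).coeff 0 < 0 := by
  refine ⟨fun R _ x y => arithmeticTutte_u22 x y, ?_⟩
  rw [arithmeticTutte_u22]
  simp
end
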